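/- Let B ≥ 1, let J be a demand multiset, let M be a sub-multiset of J whose elements are listed in nonincreasing order s_1 ≥ s_2 ≥ … ≥ s_n, and let q be an integer with 1 ≤ q ≤ n. Let M̃ be the multiset consisting of, for each index i with q < i ≤ n, the value s_{q·⌊(i−1)/q⌋ + 1} (i.e., each element is rounded up to the largest element of its consecutive block of q indices, and the block containing the q largest elements is deleted). Then LP_mach((J − M) + M̃) ≤ LP_mach(J). -/

import Mathlib

open scoped BigOperators

/-- A demand multiset for failover capacity `B`: every size lies in `(0, min 1 (B/2)]`. -/
def IsDemandMultiset (B : ℝ) (J : Multiset ℝ) : Prop :=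
  ∀ s ∈ J, 0 < s ∧ s ≤ min 1 (B / 2)

/-- A configuration: a multiset of sizes in `(0, min 1 (B/2)]` with total size at most 1
and total size plus maximum size at most `B`. -/
def IsConfig (B : ℝ) (C : Multiset ℝ) : Prop :=
  IsDemandMultiset B C ∧ C.sum ≤ 1 ∧ ∀ s ∈ C, C.sum + s ≤ B

/-- A feasible solution of the demand multiset `J` on `m` machines: each demand is assigned
to an unordered pair of distinct machines (represented by a symmetric, diagonal-free
family `A u v` of multisets of demands whose total is `J`), satisfying, at every machine `u`,
the Nominal constraint `L_u ≤ 1` and the Failover constraint `L_u + max_{v ≠ u} L_{uv} ≤ B`. -/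
def IsFeasibleSolution (B : ℝ) (J : Multiset ℝ) (m : ℕ) : Prop :=
  ∃ A : Fin m → Fin m → Multiset ℝ,
    (∀ u v, A u v = A v u) ∧
    (∀ u, A u u = 0) ∧
    (∑ p ∈ Finset.univ.filter (fun p : Fin m × Fin m => p.1 < p.2), A p.1 p.2) = J ∧
    (∀ u, (∑ v, (A u v).sum) ≤ 1) ∧
    (∀ u v, v ≠ u → (∑ w, (A u w).sum) + (A u v).sum ≤ B)

/-- A feasible solution of the configuration LP of `J`: a finitely supported nonnegative
vector over configurations whose elements are size values occurring in `J`, covering each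
distinct size value `t` at least `2 · mult_t(J)` times. -/
def IsLPSolution (B : ℝ) (J : Multiset ℝ) (x : Multiset ℝ →₀ ℝ) : Prop :=
  (∀ C, 0 ≤ x C) ∧
  (∀ C ∈ x.support, IsConfig B C ∧ ∀ s ∈ C, s ∈ J) ∧
  (∀ t ∈ J, 2 * (J.count t : ℝ) ≤ ∑ C ∈ x.support, x C * (C.count t : ℝ))

/-- The optimal value `LP_mach(J)` of the configuration LP of `J`. -/
noncomputable def LPmach (B : ℝ) (J : Multiset ℝ) : ℝ :=
  sInf {v | ∃ x : Multiset ℝ →₀ ℝ, IsLPSolution B J x ∧ (∑ C ∈ x.support, x C) = v}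


-- helper: weighted sum over support as Finsupp.sum
lemma fsum_eq (x : Multiset ℝ →₀ ℝ) (g : Multiset ℝ → ℝ) :
    ∑ C ∈ x.support, x C * g C = x.sum (fun C r => r * g C) := rfl

lemma mapDomain_nonneg (f : Multiset ℝ → Multiset ℝ) (x : Multiset ℝ →₀ ℝ)
    (hx : ∀ a, 0 ≤ x a) (D : Multiset ℝ) : 0 ≤ Finsupp.mapDomain f x D := by
  classical
  rw [Finsupp.mapDomain, Finsupp.sum_apply, Finsupp.sum]
  refine Finset.sum_nonneg fun a _ => ?_
  rw [Finsupp.single_apply]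
  split
  · exact hx a
  · exact le_refl _

lemma sum_mapDomain (f : Multiset ℝ → Multiset ℝ) (x : Multiset ℝ →₀ ℝ)
    (g : Multiset ℝ → ℝ) :
    ∑ D ∈ (Finsupp.mapDomain f x).support, (Finsupp.mapDomain f x) D * g D
      = ∑ C ∈ x.support, x C * g (f C) := by
  rw [fsum_eq, fsum_eq]
  exact Finsupp.sum_mapDomain_index (by simp) (fun b m₁ m₂ => add_mul m₁ m₂ (g b))

lemma sum_map_le (C : Multiset ℝ) (f : ℝ → ℝ) (h : ∀ a ∈ C, f a ≤ a) :
    (C.map f).sum ≤ C.sum := by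
  induction C using Multiset.induction_on with
  | empty => simp
  | cons a C ih =>
    simp only [Multiset.map_cons, Multiset.sum_cons]
    exact add_le_add (h a (Multiset.mem_cons_self a C))
      (ih fun b hb => h b (Multiset.mem_cons_of_mem hb))

lemma count_map_t (t t' : ℝ) (hne : t' ≠ t) (C : Multiset ℝ) :
    (C.map (fun a => if a = t then t' else a)).count t = 0 := by
  classical
  rw [Multiset.count_eq_zero]
  intro h
  obtain ⟨a, _, ha⟩ := Multiset.mem_map.1 h
  by_cases hat : a = t
  · rw [if_pos hat] at ha; exact hne ha
  · rw [if_neg hat] at ha; exact hat ha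

lemma count_map_t' (t t' : ℝ) (hne : t' ≠ t) (C : Multiset ℝ) :
    (C.map (fun a => if a = t then t' else a)).count t' = C.count t + C.count t' := by
  classical
  induction C using Multiset.induction_on with
  | empty => simp
  | cons a C ih =>
    rw [Multiset.map_cons]
    by_cases hat : a = t
    · rw [if_pos hat]
      simp only [Multiset.count_cons, ih]
      split_ifs <;>
        first
        | omega
        | exact absurd ((by assumption : t' = a).trans (by assumption : t = a).symm) hne
        | simp_all
    · rw [if_neg hat]
      simp only [Multiset.count_cons, ih]
      split_ifs <;>
        first
        | omega
        | exact absurd ((by assumption : t' = a).trans (by assumption : t = a).symm) hne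
        | simp_all

lemma count_map_other (t t' u : ℝ) (hut : u ≠ t) (hut' : u ≠ t') (C : Multiset ℝ) :
    (C.map (fun a => if a = t then t' else a)).count u = C.count u := by
  classical
  induction C using Multiset.induction_on with
  | empty => simp
  | cons a C ih =>
    rw [Multiset.map_cons]
    by_cases hat : a = t
    · rw [if_pos hat]
      simp only [Multiset.count_cons, ih]
      split_ifs <;>
        first
        | omega
        | simp_all
        | exact absurd ((by assumption : t' = a).trans (by assumption : t = a).symm) hne
    · rw [if_neg hat]
      simp only [Multiset.count_cons, ih]

lemma LPmach_le_of_transfer (B : ℝ) (K K' : Multiset ℝ)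
    (hne : ∃ x, IsLPSolution B K x)
    (h : ∀ x, IsLPSolution B K x → ∃ x', IsLPSolution B K' x' ∧
      (∑ C ∈ x'.support, x' C) ≤ (∑ C ∈ x.support, x C)) :
    LPmach B K' ≤ LPmach B K := by
  obtain ⟨x0, hx0⟩ := hne
  refine le_csInf ⟨_, x0, hx0, rfl⟩ ?_
  rintro v ⟨x, hx, rfl⟩
  obtain ⟨x', hx', hle⟩ := h x hx
  have hbdd : BddBelow {v | ∃ y : Multiset ℝ →₀ ℝ, IsLPSolution B K' y ∧
      (∑ C ∈ y.support, y C) = v} := by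
    refine ⟨0, ?_⟩
    rintro v ⟨y, hy, rfl⟩
    exact Finset.sum_nonneg fun C _ => hy.1 C
  exact le_trans (csInf_le hbdd ⟨x', hx', rfl⟩) hle

lemma exists_sol (B : ℝ) (hB : 1 ≤ B) (K : Multiset ℝ) (hK : IsDemandMultiset B K) :
    ∃ x, IsLPSolution B K x := by
  classical
  set x : Multiset ℝ →₀ ℝ :=
    ∑ t ∈ K.toFinset, Finsupp.single ({t} : Multiset ℝ) (2 * (K.count t : ℝ)) with hxdef
  have hxapp : ∀ C, x C = ∑ t ∈ K.toFinset,
      (if ({t} : Multiset ℝ) = C then 2 * (K.count t : ℝ) else 0) := by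
    intro C
    rw [hxdef, Finsupp.finset_sum_apply]
    exact Finset.sum_congr rfl fun t _ => Finsupp.single_apply
  have hxval : ∀ t ∈ K.toFinset, x ({t} : Multiset ℝ) = 2 * (K.count t : ℝ) := by
    intro t ht
    rw [hxapp]
    rw [Finset.sum_eq_single t]
    · simp
    · intro b _ hbt
      rw [if_neg]
      intro h
      exact hbt (Multiset.singleton_inj.1 h)
    · intro h; exact absurd ht h
  have hnn : ∀ C, 0 ≤ x C := by
    intro C
    rw [hxapp]
    refine Finset.sum_nonneg fun t _ => ?_
    split
    · positivity
    · exact le_refl _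
  have hsupp : ∀ C ∈ x.support, ∃ t ∈ K.toFinset, C = ({t} : Multiset ℝ) := by
    intro C hC
    rw [hxdef] at hC
    obtain ⟨t, ht, hCt⟩ := Finsupp.mem_support_finset_sum C hC
    exact ⟨t, ht, Finset.mem_singleton.1 (Finsupp.support_single_subset hCt)⟩
  have hSsub : x.support ⊆ K.toFinset.image (fun t => ({t} : Multiset ℝ)) := by
    intro C hC
    obtain ⟨t, ht, rfl⟩ := hsupp C hC
    exact Finset.mem_image_of_mem _ ht
  refine ⟨x, hnn, ?_, ?_⟩
  · intro C hC
    obtain ⟨t, ht, rfl⟩ := hsupp C hC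
    have htK : t ∈ K := Multiset.mem_toFinset.1 ht
    obtain ⟨ht0, ht1⟩ := hK t htK
    have h1 : t ≤ 1 := le_trans ht1 (min_le_left _ _)
    have h2 : t ≤ B / 2 := le_trans ht1 (min_le_right _ _)
    refine ⟨⟨?_, ?_, ?_⟩, ?_⟩
    · intro a ha
      rw [Multiset.mem_singleton] at ha
      subst ha
      exact ⟨ht0, ht1⟩
    · simpa using h1
    · intro a ha
      rw [Multiset.mem_singleton] at ha
      subst ha
      simp only [Multiset.sum_singleton]
      linarith
    · intro a ha
      rw [Multiset.mem_singleton] at ha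
      subst ha
      exact htK
  · intro u huK
    have huF : u ∈ K.toFinset := Multiset.mem_toFinset.2 huK
    have hss : ∑ C ∈ x.support, x C * (C.count u : ℝ)
        = ∑ C ∈ K.toFinset.image (fun t => ({t} : Multiset ℝ)), x C * (C.count u : ℝ) := by
      refine Finset.sum_subset hSsub ?_
      intro C _ hC
      rw [Finsupp.notMem_support_iff.1 hC, zero_mul]
    rw [hss, Finset.sum_image (fun a _ b _ h => Multiset.singleton_inj.1 h)]
    rw [Finset.sum_eq_single u]
    · rw [hxval u huF]
      simp
    · intro t ht htu
      rw [Multiset.count_singleton, if_neg (fun h : u = t => htu h.symm), Nat.cast_zero, mul_zero]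
    · intro h; exact absurd huF h

lemma cov_nonneg (x : Multiset ℝ →₀ ℝ) (hx : ∀ C, 0 ≤ x C) (g : Multiset ℝ → ℕ) :
    0 ≤ ∑ C ∈ x.support, x C * (g C : ℝ) :=
  Finset.sum_nonneg fun C _ => mul_nonneg (hx C) (Nat.cast_nonneg _)

lemma LPmach_erase_le (B : ℝ) (hB : 1 ≤ B) (K : Multiset ℝ) (hK : IsDemandMultiset B K)
    (t : ℝ) (ht : t ∈ K) : LPmach B (K.erase t) ≤ LPmach B K := by
  classical
  refine LPmach_le_of_transfer B K _ (exists_sol B hB K hK) ?_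
  intro x hx
  obtain ⟨hnn, hsupp, hcov⟩ := hx
  by_cases hc : 2 ≤ K.count t
  · -- x itself works
    refine ⟨x, ⟨hnn, ?_, ?_⟩, le_refl _⟩
    · intro C hC
      obtain ⟨hcfg, hel⟩ := hsupp C hC
      refine ⟨hcfg, fun a ha => ?_⟩
      have haK := hel a ha
      by_cases hat : a = t
      · subst hat
        rw [← Multiset.count_pos, Multiset.count_erase_self]
        omega
      · rw [← Multiset.count_pos, Multiset.count_erase_of_ne hat]
        exact Multiset.count_pos.2 haK
    · intro u hu
      have huK : u ∈ K := Multiset.mem_of_mem_erase hu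
      refine le_trans ?_ (hcov u huK)
      have : (K.erase t).count u ≤ K.count u := Multiset.count_le_of_le _ (Multiset.erase_le t K)
      have h2 : ((K.erase t).count u : ℝ) ≤ (K.count u : ℝ) := Nat.cast_le.2 this
      linarith
  · -- count = 1 : filter out t
    have hc1 : K.count t = 1 := by
      have := Multiset.count_pos.2 ht; omega
    set f : Multiset ℝ → Multiset ℝ := fun C => C.filter (fun a => a ≠ t) with hf
    refine ⟨Finsupp.mapDomain f x, ⟨?_, ?_, ?_⟩, ?_⟩
    · exact fun C => mapDomain_nonneg f x hnn C
    · intro D hD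
      have hD' := Finsupp.mapDomain_support hD
      obtain ⟨C, hC, rfl⟩ := Finset.mem_image.1 hD'
      obtain ⟨⟨hdem, hsum, hmax⟩, hel⟩ := hsupp C hC
      have hsub : f C ≤ C := Multiset.filter_le _ C
      have hsumle : (f C).sum ≤ C.sum := by
        obtain ⟨u, hu⟩ := Multiset.le_iff_exists_add.1 hsub
        have hcs : C.sum = (f C).sum + u.sum := by
          conv_lhs => rw [hu]
          exact Multiset.sum_add _ _
        have : 0 ≤ u.sum := Multiset.sum_nonneg fun a ha =>
          le_of_lt (hdem a (by rw [hu]; exact Multiset.mem_add.2 (Or.inr ha))).1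
        linarith
      refine ⟨⟨?_, le_trans hsumle hsum, ?_⟩, ?_⟩
      · intro a ha
        exact hdem a (Multiset.mem_of_le hsub ha)
      · intro a ha
        have haC : a ∈ C := Multiset.mem_of_le hsub ha
        have := hmax a haC
        linarith
      · intro a ha
        rw [hf, Multiset.mem_filter] at ha
        obtain ⟨haC, hat⟩ := ha
        have haK := hel a haC
        rw [← Multiset.count_pos, Multiset.count_erase_of_ne hat]
        exact Multiset.count_pos.2 haK
    · intro u hu
      have hut : u ≠ t := by
        intro h; subst h
        have : (K.erase u).count u = 0 := by
          rw [Multiset.count_erase_self]; omega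
        exact absurd (Multiset.count_pos.2 hu) (by omega)
      have huK : u ∈ K := Multiset.mem_of_mem_erase hu
      have key : ∑ D ∈ (Finsupp.mapDomain f x).support, (Finsupp.mapDomain f x) D * ((D.count u : ℕ) : ℝ)
          = ∑ C ∈ x.support, x C * (C.count u : ℝ) := by
        rw [sum_mapDomain f x (fun D => (D.count u : ℝ))]
        refine Finset.sum_congr rfl fun C _ => ?_
        congr 1
        rw [hf]
        norm_cast
        rw [Multiset.count_filter, if_pos hut]
      rw [key, Multiset.count_erase_of_ne hut]
      exact hcov u huK
    · show (Finsupp.mapDomain f x).sum (fun _ r => r) ≤ x.sum (fun _ r => r)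
      rw [Finsupp.sum_mapDomain_index (fun _ => rfl) (fun _ m₁ m₂ => rfl)]

lemma cov_affine (x : Multiset ℝ →₀ ℝ) (f : Multiset ℝ → Multiset ℝ) (θ : ℝ)
    (g : Multiset ℝ → ℝ) :
    (∑ D ∈ ((1-θ) • x + θ • Finsupp.mapDomain f x).support,
        ((1-θ) • x + θ • Finsupp.mapDomain f x) D * g D)
      = (1-θ) * (∑ C ∈ x.support, x C * g C) + θ * (∑ C ∈ x.support, x C * g (f C)) := by
  classical
  rw [fsum_eq]
  rw [Finsupp.sum_add_index' (fun D => zero_mul (g D)) (fun D r₁ r₂ => add_mul r₁ r₂ (g D))]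
  rw [Finsupp.sum_smul_index (fun D => zero_mul (g D)),
      Finsupp.sum_smul_index (fun D => zero_mul (g D))]
  have h1 : (x.sum fun C r => (1-θ) * r * g C) = (1-θ) * ∑ C ∈ x.support, x C * g C := by
    rw [fsum_eq, Finsupp.mul_sum]
    exact Finsupp.sum_congr fun C _ => by ring
  have h2 : ((Finsupp.mapDomain f x).sum fun D r => θ * r * g D)
      = θ * ∑ C ∈ x.support, x C * g (f C) := by
    rw [Finsupp.sum_mapDomain_index (fun D => by ring)
      (fun D r₁ r₂ => by ring), fsum_eq, Finsupp.mul_sum]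
    exact Finsupp.sum_congr fun C _ => by ring
  rw [h1, h2]

lemma total_affine (x : Multiset ℝ →₀ ℝ) (f : Multiset ℝ → Multiset ℝ) (θ : ℝ) :
    (∑ D ∈ ((1-θ) • x + θ • Finsupp.mapDomain f x).support,
        ((1-θ) • x + θ • Finsupp.mapDomain f x) D)
      = ∑ C ∈ x.support, x C := by
  classical
  have := cov_affine x f θ (fun _ => 1)
  simp only [mul_one] at this
  rw [this]
  ring

lemma LPmach_replace_le (B : ℝ) (hB : 1 ≤ B) (K : Multiset ℝ) (hK : IsDemandMultiset B K)
    (t t' : ℝ) (ht : t ∈ K) (ht'0 : 0 < t') (hle : t' ≤ t) :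
    LPmach B (t' ::ₘ K.erase t) ≤ LPmach B K := by
  classical
  by_cases htt : t' = t
  · subst htt
    rw [Multiset.cons_erase ht]
  · refine LPmach_le_of_transfer B K _ (exists_sol B hB K hK) ?_
    intro x hx
    obtain ⟨hnn, hsupp, hcov⟩ := hx
    set σ : ℝ → ℝ := fun a => if a = t then t' else a with hσ
    set sb : Multiset ℝ → Multiset ℝ := fun C => C.map σ with hsb
    set S : ℝ := ∑ C ∈ x.support, x C * (C.count t : ℝ) with hS
    have hct1 : 1 ≤ K.count t := Multiset.count_pos.2 ht
    have hS2 : 2 * (K.count t : ℝ) ≤ S := hcov t ht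
    have hS2' : (2:ℝ) ≤ S := by
      have : (1:ℝ) ≤ (K.count t : ℝ) := by exact_mod_cast hct1
      linarith
    have hSpos : (0:ℝ) < S := by linarith
    set θ : ℝ := if K.count t = 1 then 1 else 2 / S with hθ
    have hθpos : 0 < θ := by
      rw [hθ]; split
      · exact one_pos
      · positivity
    have hθ1 : θ ≤ 1 := by
      rw [hθ]; split
      · exact le_refl _
      · rw [div_le_one hSpos]; linarith
    have hθS : 2 ≤ θ * S := by
      rw [hθ]; split
      · linarith
      · rw [div_mul_cancel₀]; linarith
    have hθS' : 2 * ((K.count t : ℝ) - 1) ≤ (1 - θ) * S := by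
      rw [hθ]; split
      · rename_i h
        rw [h]
        simp
      · rename_i h
        have h2 : 2 ≤ K.count t := by omega
        have : (1 - 2/S) * S = S - 2 := by field_simp
        rw [this]
        linarith
    have hθne1 : θ ≠ 1 → 2 ≤ K.count t := by
      intro h
      rw [hθ] at h
      by_contra hcon
      have : K.count t = 1 := by omega
      rw [if_pos this] at h
      exact h rfl
    set y : Multiset ℝ →₀ ℝ := (1-θ) • x + θ • Finsupp.mapDomain sb x with hy
    have hyapp : ∀ D, y D = (1-θ) * x D + θ * (Finsupp.mapDomain sb x) D := by
      intro D
      rw [hy, Finsupp.add_apply, Finsupp.smul_apply, Finsupp.smul_apply, smul_eq_mul, smul_eq_mul]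
    -- counts of sb C
    have hcnt_t : ∀ C : Multiset ℝ, (sb C).count t = 0 := fun C => count_map_t t t' htt C
    have hcnt_t' : ∀ C : Multiset ℝ, (sb C).count t' = C.count t + C.count t' :=
      fun C => count_map_t' t t' htt C
    have hcnt_o : ∀ u, u ≠ t → u ≠ t' → ∀ C : Multiset ℝ, (sb C).count u = C.count u :=
      fun u h1 h2 C => count_map_other t t' u h1 h2 C
    refine ⟨y, ⟨?_, ?_, ?_⟩, ?_⟩
    · -- nonneg
      intro D
      rw [hyapp]
      have := mapDomain_nonneg sb x hnn D
      have := hnn D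
      nlinarith
    · -- support
      intro D hD
      have hDne : y D ≠ 0 := Finsupp.mem_support_iff.1 hD
      have hcases : x D ≠ 0 ∧ θ ≠ 1 ∨ (Finsupp.mapDomain sb x) D ≠ 0 := by
        by_contra hcon
        push_neg at hcon
        obtain ⟨h1, h2⟩ := hcon
        apply hDne
        rw [hyapp]
        by_cases hxD : x D = 0
        · rw [hxD, h2]; ring
        · rw [h1 hxD, h2]; ring
      rcases hcases with ⟨hxD, hθn⟩ | hmD
      · obtain ⟨hcfg, hel⟩ := hsupp D (Finsupp.mem_support_iff.2 hxD)
        refine ⟨hcfg, fun a ha => ?_⟩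
        have haK := hel a ha
        by_cases hat : a = t
        · subst hat
          have h2 : 2 ≤ K.count a := hθne1 hθn
          refine Multiset.mem_cons_of_mem ?_
          rw [← Multiset.count_pos, Multiset.count_erase_self]
          omega
        · exact Multiset.mem_cons_of_mem (by
            rw [← Multiset.count_pos, Multiset.count_erase_of_ne hat]
            exact Multiset.count_pos.2 haK)
      · have hDm : D ∈ (Finsupp.mapDomain sb x).support := Finsupp.mem_support_iff.2 hmD
        obtain ⟨C, hC, rfl⟩ := Finset.mem_image.1 (Finsupp.mapDomain_support hDm)
        obtain ⟨⟨hdem, hsum, hmax⟩, hel⟩ := hsupp C hC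
        have hσle : ∀ a ∈ C, σ a ≤ a := by
          intro a _
          rw [hσ]
          dsimp only
          split
          · rename_i h; rw [h]; exact hle
          · exact le_refl _
        have hsumle : (sb C).sum ≤ C.sum := sum_map_le C σ hσle
        refine ⟨⟨?_, le_trans hsumle hsum, ?_⟩, ?_⟩
        · intro b hb
          obtain ⟨a, haC, rfl⟩ := Multiset.mem_map.1 hb
          have hd := hdem a haC
          rw [hσ]
          dsimp only
          split
          · rename_i h
            refine ⟨ht'0, ?_⟩
            have := (hK t ht).2
            exact le_trans hle this
          · exact hd
        · intro b hb
          obtain ⟨a, haC, rfl⟩ := Multiset.mem_map.1 hb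
          have h1 := hmax a haC
          have h2 := hσle a haC
          have : (sb C).sum = (C.map σ).sum := rfl
          linarith [this ▸ hsumle]
        · intro b hb
          obtain ⟨a, haC, rfl⟩ := Multiset.mem_map.1 hb
          have haK := hel a haC
          rw [hσ]
          dsimp only
          split
          · exact Multiset.mem_cons_self _ _
          · rename_i h
            exact Multiset.mem_cons_of_mem (by
              rw [← Multiset.count_pos, Multiset.count_erase_of_ne h]
              exact Multiset.count_pos.2 haK)
    · -- coverage
      intro u hu
      have hcova := cov_affine x sb θ (fun D => (D.count u : ℝ))
      rw [hy, hcova]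
      by_cases hut : u = t
      · subst hut
        have hmem : u ∈ K.erase u := by
          rcases Multiset.mem_cons.1 hu with h | h
          · exact absurd h.symm htt
          · exact h
        have hc2 : 2 ≤ K.count u := by
          have := Multiset.count_pos.2 hmem
          rw [Multiset.count_erase_self] at this
          omega
        have hcntK1 : (t' ::ₘ K.erase u).count u = K.count u - 1 := by
          rw [Multiset.count_cons, if_neg (fun h : u = t' => htt h.symm),
            Multiset.count_erase_self]
          omega
        have hBzero : (∑ C ∈ x.support, x C * (((sb C).count u : ℕ) : ℝ)) = 0 := by
          refine Finset.sum_eq_zero fun C _ => ?_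
          rw [hcnt_t C, Nat.cast_zero, mul_zero]
        rw [hcntK1, hBzero, mul_zero, add_zero]
        have hcast : ((K.count u - 1 : ℕ) : ℝ) = (K.count u : ℝ) - 1 := by
          rw [Nat.cast_sub hct1, Nat.cast_one]
        rw [hcast]
        linarith
      · by_cases hut' : u = t'
        · subst hut'
          have hcntK1 : (u ::ₘ K.erase t).count u = K.count u + 1 := by
            rw [Multiset.count_cons, if_pos rfl, Multiset.count_erase_of_ne hut]
          have hBsum : (∑ C ∈ x.support, x C * (((sb C).count u : ℕ) : ℝ))
              = S + ∑ C ∈ x.support, x C * (C.count u : ℝ) := by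
            rw [hS, ← Finset.sum_add_distrib]
            refine Finset.sum_congr rfl fun C _ => ?_
            rw [hcnt_t' C]
            push_cast
            ring
          rw [hcntK1, hBsum]
          have hA' : 2 * (K.count u : ℝ) ≤ ∑ C ∈ x.support, x C * (C.count u : ℝ) := by
            by_cases huK : u ∈ K
            · exact hcov u huK
            · have : K.count u = 0 := Multiset.count_eq_zero.2 huK
              rw [this, Nat.cast_zero, mul_zero]
              exact cov_nonneg x hnn (fun C => C.count u)
          push_cast
          nlinarith [cov_nonneg x hnn (fun C => C.count u)]
        · have humem : u ∈ K.erase t := by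
            rcases Multiset.mem_cons.1 hu with h | h
            · exact absurd h hut'
            · exact h
          have huK : u ∈ K := Multiset.mem_of_mem_erase humem
          have hcntK1 : (t' ::ₘ K.erase t).count u = K.count u := by
            rw [Multiset.count_cons, if_neg (fun h : u = t' => hut' h),
              Multiset.count_erase_of_ne hut]
            omega
          have hBsum : (∑ C ∈ x.support, x C * (((sb C).count u : ℕ) : ℝ))
              = ∑ C ∈ x.support, x C * (C.count u : ℝ) := by
            refine Finset.sum_congr rfl fun C _ => ?_
            rw [hcnt_o u hut hut' C]
          rw [hcntK1, hBsum]
          have := hcov u huK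
          linarith
    · -- total
      rw [hy, total_affine]

lemma demand_of_le (B : ℝ) {K L : Multiset ℝ} (h : L ≤ K) (hK : IsDemandMultiset B K) :
    IsDemandMultiset B L := fun a ha => hK a (Multiset.mem_of_le h ha)

lemma LPmach_sub_le (B : ℝ) (hB : 1 ≤ B) (K : Multiset ℝ) (hK : IsDemandMultiset B K)
    (D : Multiset ℝ) (hD : D ≤ K) : LPmach B (K - D) ≤ LPmach B K := by
  classical
  revert hD
  induction D using Multiset.induction_on with
  | empty => intro _; simp
  | cons a D ih =>
    intro hcons
    have hD : D ≤ K := le_trans (Multiset.le_cons_self D a) hcons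
    have hcnt : D.count a + 1 ≤ K.count a := by
      have := Multiset.le_iff_count.1 hcons a
      rw [Multiset.count_cons_self] at this
      omega
    have ha : a ∈ K - D := by
      rw [← Multiset.count_pos, Multiset.count_sub]
      omega
    have heq : K - (a ::ₘ D) = (K - D).erase a := by
      rw [← Multiset.sub_singleton, ← Multiset.singleton_add,
        add_comm ({a} : Multiset ℝ) D, tsub_add_eq_tsub_tsub]
    rw [heq]
    exact le_trans
      (LPmach_erase_le B hB (K - D) (demand_of_le B tsub_le_self hK) a ha) (ih hD)

lemma rel_map_both {r : ℝ → ℝ → Prop} (f g : ℕ → ℝ) (m : Multiset ℕ)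
    (h : ∀ j ∈ m, r (f j) (g j)) : Multiset.Rel r (m.map f) (m.map g) := by
  induction m using Multiset.induction_on with
  | empty => simp [Multiset.Rel.zero]
  | cons a m ih =>
    rw [Multiset.map_cons, Multiset.map_cons]
    exact Multiset.Rel.cons (h a (Multiset.mem_cons_self a m))
      (ih fun j hj => h j (Multiset.mem_cons_of_mem hj))

lemma LPmach_rel_le (B : ℝ) (hB : 1 ≤ B) (M₁ M₂ : Multiset ℝ)
    (h : Multiset.Rel (fun a b => 0 < a ∧ a ≤ b) M₁ M₂) :
    ∀ L : Multiset ℝ, IsDemandMultiset B (L + M₂) → LPmach B (L + M₁) ≤ LPmach B (L + M₂) := by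
  induction h with
  | zero => intro L _; exact le_refl _
  | @cons a b as bs hab hrel ih =>
    intro L hdem
    have hbmem : b ∈ L + b ::ₘ bs := Multiset.mem_add.2 (Or.inr (Multiset.mem_cons_self b bs))
    have hdem2 : IsDemandMultiset B ((a ::ₘ L) + bs) := by
      intro c hc
      rw [Multiset.cons_add, Multiset.mem_cons] at hc
      rcases hc with rfl | hc
      · exact ⟨hab.1, le_trans hab.2 (hdem b hbmem).2⟩
      · refine hdem c ?_
        rw [Multiset.mem_add] at hc
        rcases hc with hc | hc
        · exact Multiset.mem_add.2 (Or.inl hc)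
        · exact Multiset.mem_add.2 (Or.inr (Multiset.mem_cons_of_mem hc))
    have h1 : L + a ::ₘ as = (a ::ₘ L) + as := by
      rw [Multiset.add_cons, Multiset.cons_add]
    have h2 : L + b ::ₘ bs = b ::ₘ (L + bs) := Multiset.add_cons b L bs
    have hKdem : IsDemandMultiset B (b ::ₘ (L + bs)) := h2 ▸ hdem
    have hrep := LPmach_replace_le B hB (b ::ₘ (L + bs)) hKdem b a
      (Multiset.mem_cons_self b (L + bs)) hab.1 hab.2
    rw [Multiset.erase_cons_head] at hrep
    calc LPmach B (L + a ::ₘ as) = LPmach B ((a ::ₘ L) + as) := by rw [h1]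
      _ ≤ LPmach B ((a ::ₘ L) + bs) := ih (a ::ₘ L) hdem2
      _ = LPmach B (a ::ₘ (L + bs)) := by rw [Multiset.cons_add]
      _ ≤ LPmach B (b ::ₘ (L + bs)) := hrep
      _ = LPmach B (L + b ::ₘ bs) := by rw [h2]

/-- Linear grouping does not increase the LP value: if `M` is a sub-multiset of the demand
multiset `J` whose elements, listed in nonincreasing order, are `s 1 ≥ s 2 ≥ … ≥ s n`, and
`1 ≤ q ≤ n`, and `M'` consists, for each index `i` with `q < i ≤ n`, of the value
`s (q·⌊(i-1)/q⌋ + 1)` (each element rounded up to the largest element of its block of `q`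
consecutive indices, the block of the `q` largest elements being deleted), then
`LP_mach((J - M) + M') ≤ LP_mach(J)`. -/
theorem stmt_11 (B : ℝ) (hB : 1 ≤ B) (J M : Multiset ℝ) (hJ : IsDemandMultiset B J)
    (hM : M ≤ J) (n q : ℕ) (hq1 : 1 ≤ q) (hqn : q ≤ n)
    (s : ℕ → ℝ)
    (hmono : ∀ i j, 1 ≤ i → i ≤ j → j ≤ n → s j ≤ s i)
    (hMs : M = (Finset.Icc 1 n).val.map s)
    (M' : Multiset ℝ)
    (hM' : M' = (Finset.Ioc q n).val.map (fun i => s (q * ((i - 1) / q) + 1))) :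
    LPmach B ((J - M) + M') ≤ LPmach B J := by
  classical
  set M'' : Multiset ℝ := (Finset.Icc 1 (n - q)).val.map s with hM''
  have hsM : ∀ k, 1 ≤ k → k ≤ n → s k ∈ M := by
    intro k h1 h2
    rw [hMs]
    exact Multiset.mem_map.2 ⟨k, Finset.mem_Icc.2 ⟨h1, h2⟩, rfl⟩
  have hM''M : M'' ≤ M := by
    rw [hM'', hMs]
    exact Multiset.map_le_map (Finset.val_le_iff.2
      (Finset.Icc_subset_Icc (le_refl 1) (Nat.sub_le n q)))
  -- reindexing of M'
  have hIoc : (Finset.Ioc q n).val = (Finset.Icc 1 (n - q)).val.map (· + q) := by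
    have h1 : (Finset.Icc 1 (n - q)).map (addRightEmbedding q) = Finset.Ioc q n := by
      rw [Finset.map_add_right_Icc, Nat.sub_add_cancel hqn, Nat.add_comm 1 q, ← Finset.Icc_add_one_left_eq_Ioc]
    rw [← h1, Finset.map_val]
    rfl
  have hM'2 : M' = (Finset.Icc 1 (n - q)).val.map (fun j => s (q * ((j + q - 1) / q) + 1)) := by
    rw [hM', hIoc, Multiset.map_map]
    rfl
  have hrel : Multiset.Rel (fun a b => 0 < a ∧ a ≤ b) M' M'' := by
    rw [hM'2, hM'']
    refine rel_map_both _ _ _ ?_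
    intro j hj
    rw [Finset.mem_val, Finset.mem_Icc] at hj
    obtain ⟨hj1, hj2⟩ := hj
    set k := q * ((j + q - 1) / q) + 1 with hk
    have hdm := Nat.div_add_mod (j + q - 1) q
    have hmlt : (j + q - 1) % q < q := Nat.mod_lt _ (by omega)
    have hjk : j ≤ k := by omega
    have hkn : k ≤ n := by omega
    have hk1 : 1 ≤ k := by omega
    have hskM : s k ∈ M := hsM k hk1 hkn
    have hskJ : s k ∈ J := Multiset.mem_of_le hM hskM
    exact ⟨(hJ _ hskJ).1, hmono j k hj1 hjk hkn⟩
  have hdem2 : IsDemandMultiset B ((J - M) + M'') := by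
    intro c hc
    rw [Multiset.mem_add] at hc
    rcases hc with hc | hc
    · exact hJ c (Multiset.mem_of_le tsub_le_self hc)
    · rw [hM''] at hc
      obtain ⟨j, hj, rfl⟩ := Multiset.mem_map.1 hc
      rw [Finset.mem_val, Finset.mem_Icc] at hj
      exact hJ _ (Multiset.mem_of_le hM (hsM j hj.1 (by omega)))
  have key1 : (J - M) + M'' = J - (M - M'') := by
    ext a
    rw [Multiset.count_add, Multiset.count_sub, Multiset.count_sub, Multiset.count_sub]
    have h1 : M''.count a ≤ M.count a := Multiset.count_le_of_le a hM''M
    have h2 : M.count a ≤ J.count a := Multiset.count_le_of_le a hM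
    omega
  calc LPmach B ((J - M) + M') ≤ LPmach B ((J - M) + M'') :=
        LPmach_rel_le B hB M' M'' hrel (J - M) hdem2
    _ = LPmach B (J - (M - M'')) := by rw [key1]
    _ ≤ LPmach B J := LPmach_sub_le B hB J hJ (M - M'') (le_trans tsub_le_self hM)
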